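/- For each integer k ≥ 1 and any MCMSs (𝒳, d_X) and (𝒴, d_Y), one has d_GW^(k)((𝒳,d_X),(𝒴,d_Y)) ≥ inf_{γ ∈ 𝒞(μ_X,μ_Y)} Σ_{(x,y)} d_WL^(k)((𝒳, d_X(x,·)), (𝒴, d_Y(y,·))) γ(x,y), where (𝒳, d_X(x,·)) denotes the ℝ-LMMC obtained by endowing 𝒳 with the label function x' ↦ d_X(x, x'), and similarly for (𝒴, d_Y(y,·)). -/

import Mathlib

open scoped BigOperators NNReal

namespace WLGW

variable {X Y W : Type*}

/-- A probability mass function on a finite type. -/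
def IsPMF [Fintype X] (p : X → ℝ) : Prop :=
  (∀ x, 0 ≤ p x) ∧ ∑ x, p x = 1

/-- `γ` is a coupling of `p` and `q`. -/
def IsCoupling [Fintype X] [Fintype Y] (p : X → ℝ) (q : Y → ℝ) (γ : X → Y → ℝ) : Prop :=
  (∀ x y, 0 ≤ γ x y) ∧ (∀ x, ∑ y, γ x y = p x) ∧ (∀ y, ∑ x, γ x y = q y)

/-- `(m, μ)` is a measure Markov chain: each `m x` is a pmf, and `μ` is a fully supported
stationary pmf. -/
def IsMMC [Fintype X] (m : X → X → ℝ) (μ : X → ℝ) : Prop :=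
  (∀ x, IsPMF (m x)) ∧ IsPMF μ ∧ (∀ x, 0 < μ x) ∧ (∀ x', ∑ x, m x x' * μ x = μ x')

/-- `dX` is a metric on the finite type `X`. -/
def IsMetricOn [Fintype X] (dX : X → X → ℝ) : Prop :=
  (∀ x, dX x x = 0) ∧ (∀ x y, dX x y = dX y x) ∧ (∀ x y, x ≠ y → 0 < dX x y) ∧
    (∀ x y z, dX x z ≤ dX x y + dX y z)

/-- The iterated Weisfeiler–Lehman cost `D_k`. -/
noncomputable def costIter [Fintype X] [Fintype Y] (mX : X → X → ℝ) (mY : Y → Y → ℝ)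
    (D0 : X → Y → ℝ) : ℕ → X → Y → ℝ
  | 0 => D0
  | k + 1 => fun x y => sInf {r : ℝ | ∃ γ : X → Y → ℝ, IsCoupling (mX x) (mY y) γ ∧
      r = ∑ x', ∑ y', costIter mX mY D0 k x' y' * γ x' y'}

/-- The Weisfeiler–Lehman distance of depth `k` between two labeled measure Markov chains. -/
noncomputable def dWL {Z : Type*} [PseudoMetricSpace Z] [Fintype X] [Fintype Y]
    (mX : X → X → ℝ) (μX : X → ℝ) (ℓX : X → Z)
    (mY : Y → Y → ℝ) (μY : Y → ℝ) (ℓY : Y → Z) (k : ℕ) : ℝ :=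
  sInf {r : ℝ | ∃ γ : X → Y → ℝ, IsCoupling μX μY γ ∧
      r = ∑ x, ∑ y, costIter mX mY (fun x y => dist (ℓX x) (ℓY y)) k x y * γ x y}

/-- The absolute Weisfeiler–Lehman distance. -/
noncomputable def dWLsup {Z : Type*} [PseudoMetricSpace Z] [Fintype X] [Fintype Y]
    (mX : X → X → ℝ) (μX : X → ℝ) (ℓX : X → Z)
    (mY : Y → Y → ℝ) (μY : Y → ℝ) (ℓY : Y → Z) : ℝ :=
  ⨆ k : ℕ, dWL mX μX ℓX mY μY ℓY k

/-- Isomorphism of labeled measure Markov chains. -/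
def LMMCIso {Z : Type*} [Fintype X] [Fintype Y]
    (mX : X → X → ℝ) (μX : X → ℝ) (ℓX : X → Z)
    (mY : Y → Y → ℝ) (μY : Y → ℝ) (ℓY : Y → Z) : Prop :=
  ∃ ψ : X ≃ Y, (∀ x, ℓY (ψ x) = ℓX x) ∧ (∀ x x', mY (ψ x) (ψ x') = mX x x') ∧
    (∀ x, μY (ψ x) = μX x)

/-- The `q`-Markov kernel of a finite simple graph. -/
noncomputable def graphKernel {V : Type*} [Fintype V] [DecidableEq V] (G : SimpleGraph V) [DecidableRel G.Adj]
    (q : ℝ) (v v' : V) : ℝ :=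
  if G.degree v = 0 then (if v' = v then 1 else 0)
  else (if v' = v then q else 0) + (if G.Adj v v' then (1 - q) / (G.degree v : ℝ) else 0)

/-- The stationary degree measure of a finite simple graph. -/
noncomputable def graphMu {V : Type*} [Fintype V] (G : SimpleGraph V) [DecidableRel G.Adj]
    (v : V) : ℝ :=
  ((max (G.degree v) 1 : ℕ) : ℝ) / ∑ v', ((max (G.degree v') 1 : ℕ) : ℝ)

/-- The type of depth-`k` Weisfeiler–Lehman labels over an initial label set `Z`. -/
def WLType (Z : Type*) : ℕ → Type _
  | 0 => Z
  | k + 1 => WLType Z k × Multiset (WLType Z k)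

/-- The Weisfeiler–Lehman label hierarchy `ℓ^k` of a labeled graph. -/
def wlLabel {V Z : Type*} [Fintype V] (G : SimpleGraph V) [DecidableRel G.Adj] (ℓ : V → Z) :
    (k : ℕ) → V → WLType Z k
  | 0 => ℓ
  | k + 1 => fun v => (wlLabel G ℓ k v, (G.neighborFinset v).val.map (wlLabel G ℓ k))

/-- The multiset `L_k((G, ℓ))` of depth-`k` WL labels of all vertices. -/
def wlMultiset {V Z : Type*} [Fintype V] (G : SimpleGraph V) [DecidableRel G.Adj]
    (ℓ : V → Z) (k : ℕ) : Multiset (WLType Z k) :=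
  Finset.univ.val.map (wlLabel G ℓ k)

/-- The WL test distinguishes two labeled graphs. -/
def WLDistinguishes {V₁ V₂ Z : Type*} [Fintype V₁] [Fintype V₂]
    (G₁ : SimpleGraph V₁) [DecidableRel G₁.Adj] (ℓ₁ : V₁ → Z)
    (G₂ : SimpleGraph V₂) [DecidableRel G₂.Adj] (ℓ₂ : V₂ → Z) : Prop :=
  ∃ k, wlMultiset G₁ ℓ₁ k ≠ wlMultiset G₂ ℓ₂ k

/-- The relabeling `ℓ^g(v) = g(ℓ(v), deg v, |V|)`. -/
def relabel {V Z Z₁ : Type*} [Fintype V] (G : SimpleGraph V) [DecidableRel G.Adj]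
    (ℓ : V → Z) (g : Z × ℕ × ℕ → Z₁) : V → Z₁ :=
  fun v => g (ℓ v, G.degree v, Fintype.card V)

/-- `kpow m k = m^{⊗k}`, the `k`-step Markov kernel (`kpow m 0` is the identity kernel). -/
def kpow [Fintype X] [DecidableEq X] (m : X → X → ℝ) : ℕ → X → X → ℝ
  | 0 => fun x x' => if x' = x then 1 else 0
  | k + 1 => fun x x'' => ∑ x', kpow m k x' x'' * m x x'

/-- The Wasserstein distance between the pushforwards `(ℓX)_# p` and `(ℓY)_# q`, expressed
through couplings of `p` and `q`. -/
noncomputable def wassersteinCost {Z : Type*} [PseudoMetricSpace Z] [Fintype X] [Fintype Y]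
    (ℓX : X → Z) (ℓY : Y → Z) (p : X → ℝ) (q : Y → ℝ) : ℝ :=
  sInf {r : ℝ | ∃ γ : X → Y → ℝ, IsCoupling p q γ ∧
      r = ∑ x, ∑ y, dist (ℓX x) (ℓY y) * γ x y}

/-- The lower bound `d_WLLB^(k)` for the WL distance. -/
noncomputable def dWLLB {Z : Type*} [PseudoMetricSpace Z] [Fintype X] [Fintype Y]
    [DecidableEq X] [DecidableEq Y]
    (mX : X → X → ℝ) (μX : X → ℝ) (ℓX : X → Z)
    (mY : Y → Y → ℝ) (μY : Y → ℝ) (ℓY : Y → Z) (k : ℕ) : ℝ :=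
  sInf {r : ℝ | ∃ γ : X → Y → ℝ, IsCoupling μX μY γ ∧
      r = ∑ x, ∑ y, wassersteinCost ℓX ℓY (kpow mX k x) (kpow mY k y) * γ x y}

/-- Dimension sequence of an MCNN: `mcnnDim d dims 0 = d`, then `dims`. -/
def mcnnDim (d : ℕ) (dims : ℕ → ℕ) : ℕ → ℕ
  | 0 => d
  | i + 1 => dims i

/-- A `k`-layer Markov chain neural network on `ℝ^d`-LMMCs: Lipschitz maps `φ_1, …, φ_{k+1}`
followed by a continuous map `ψ`. -/
structure MCNN (d k : ℕ) where
  dims : ℕ → ℕ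
  φ : (i : ℕ) → EuclideanSpace ℝ (Fin (mcnnDim d dims i)) →
      EuclideanSpace ℝ (Fin (mcnnDim d dims (i + 1)))
  φ_lip : ∀ i, ∃ K : ℝ≥0, LipschitzWith K (φ i)
  ψ : EuclideanSpace ℝ (Fin (mcnnDim d dims (k + 1))) → ℝ
  ψ_cont : Continuous ψ

/-- Labels after `j` layers of an MCNN (the map `F_{φ_j} ∘ ⋯ ∘ F_{φ_1}`). -/
noncomputable def mcnnLabel {X : Type*} [Fintype X] {d k : ℕ} (N : MCNN d k)
    (m : X → X → ℝ) (ℓ : X → EuclideanSpace ℝ (Fin d)) :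
    (j : ℕ) → X → EuclideanSpace ℝ (Fin (mcnnDim d N.dims j))
  | 0 => ℓ
  | j + 1 => fun x => ∑ x', m x x' • N.φ j (mcnnLabel N m ℓ j x')

/-- Evaluation of an MCNN on an `ℝ^d`-LMMC: `ψ ∘ S_{φ_{k+1}} ∘ F_{φ_k} ∘ ⋯ ∘ F_{φ_1}`. -/
noncomputable def mcnnEval {X : Type*} [Fintype X] {d k : ℕ} (N : MCNN d k)
    (m : X → X → ℝ) (μ : X → ℝ) (ℓ : X → EuclideanSpace ℝ (Fin d)) : ℝ :=
  N.ψ (∑ x, μ x • N.φ k (mcnnLabel N m ℓ k x))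

/-- `k`-step couplings between the Markov kernels `mX` and `mY` (defined for `k ≥ 1`). -/
def IsStepCoupling [Fintype X] [Fintype Y] (mX : X → X → ℝ) (mY : Y → Y → ℝ) :
    ℕ → (X → Y → X → Y → ℝ) → Prop
  | 0, _ => False
  | 1, ν => ∀ x y, IsCoupling (mX x) (mY y) (ν x y)
  | k + 2, ν => ∃ νk ν1 : X → Y → X → Y → ℝ,
      IsStepCoupling mX mY (k + 1) νk ∧ (∀ x y, IsCoupling (mX x) (mY y) (ν1 x y)) ∧
      ν = fun x y x' y' => ∑ x'', ∑ y'', νk x'' y'' x' y' * ν1 x y x'' y''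

/-- The `k`-distortion `dis^(k)(γ, ν)`. -/
def disk [Fintype X] [Fintype Y] (dX : X → X → ℝ) (dY : Y → Y → ℝ)
    (γ : X → Y → ℝ) (ν : X → Y → X → Y → ℝ) : ℝ :=
  ∑ x, ∑ y, ∑ x'', ∑ y'', ∑ x', ∑ y',
    |dX x x' - dY y y'| * ν x'' y'' x' y' * γ x'' y'' * γ x y

/-- The `k`-Gromov–Wasserstein distance between Markov chain metric spaces. -/
noncomputable def dGWk [Fintype X] [Fintype Y]
    (mX : X → X → ℝ) (dX : X → X → ℝ) (μX : X → ℝ)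
    (mY : Y → Y → ℝ) (dY : Y → Y → ℝ) (μY : Y → ℝ) (k : ℕ) : ℝ :=
  sInf {r : ℝ | ∃ (γ : X → Y → ℝ) (ν : X → Y → X → Y → ℝ),
      IsCoupling μX μY γ ∧ IsStepCoupling mX mY k ν ∧ r = disk dX dY γ ν}

/-- The absolute Gromov–Wasserstein distance between MCMSs: `sup_{k ≥ 1} d_GW^(k)`. -/
noncomputable def dGWMCMS [Fintype X] [Fintype Y]
    (mX : X → X → ℝ) (dX : X → X → ℝ) (μX : X → ℝ)
    (mY : Y → Y → ℝ) (dY : Y → Y → ℝ) (μY : Y → ℝ) : ℝ :=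
  ⨆ k : ℕ, dGWk mX dX μX mY dY μY (k + 1)

/-- Isomorphism of Markov chain metric spaces. -/
def MCMSIso [Fintype X] [Fintype Y]
    (mX : X → X → ℝ) (dX : X → X → ℝ) (μX : X → ℝ)
    (mY : Y → Y → ℝ) (dY : Y → Y → ℝ) (μY : Y → ℝ) : Prop :=
  ∃ ψ : X ≃ Y, (∀ x x', dY (ψ x) (ψ x') = dX x x') ∧
    (∀ x x', mY (ψ x) (ψ x') = mX x x') ∧ (∀ x, μY (ψ x) = μX x)

/-- The decoupled Gromov–Wasserstein distance between finite metric measure spaces. -/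
noncomputable def dGWbi [Fintype X] [Fintype Y]
    (dX : X → X → ℝ) (μX : X → ℝ) (dY : Y → Y → ℝ) (μY : Y → ℝ) : ℝ :=
  sInf {r : ℝ | ∃ γ γ' : X → Y → ℝ, IsCoupling μX μY γ ∧ IsCoupling μX μY γ' ∧
      r = ∑ x, ∑ y, ∑ x', ∑ y', |dX x x' - dY y y'| * γ' x' y' * γ x y}

/-- `k`-step couplings between the measures `μX` and `μY`
(`k = 0` gives ordinary couplings). -/
def IsMeasureStepCoupling [Fintype X] [Fintype Y] (mX : X → X → ℝ) (mY : Y → Y → ℝ)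
    (μX : X → ℝ) (μY : Y → ℝ) : ℕ → (X → Y → ℝ) → Prop
  | 0, γ => IsCoupling μX μY γ
  | k + 1, γk => ∃ (γ : X → Y → ℝ) (ν : X → Y → X → Y → ℝ),
      IsCoupling μX μY γ ∧ IsStepCoupling mX mY (k + 1) ν ∧
      γk = fun x' y' => ∑ x, ∑ y, ν x y x' y' * γ x y

/-- The WWL label iteration. -/
noncomputable def wwlLabel {V : Type*} [Fintype V] {d : ℕ} (G : SimpleGraph V)
    [DecidableRel G.Adj] (ℓ : V → EuclideanSpace ℝ (Fin d)) :
    ℕ → V → EuclideanSpace ℝ (Fin d)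
  | 0 => ℓ
  | i + 1 => fun v => (1 / 2 : ℝ) •
      (wwlLabel G ℓ i v + ((G.degree v : ℝ))⁻¹ • ∑ v' ∈ G.neighborFinset v, wwlLabel G ℓ i v')

/-- The stacked WWL label `L^k_G = (ℓ^0, …, ℓ^k)`, valued in Euclidean `ℝ^{d(k+1)}`. -/
noncomputable def stackedLabel {V : Type*} [Fintype V] {d : ℕ} (G : SimpleGraph V)
    [DecidableRel G.Adj] (ℓ : V → EuclideanSpace ℝ (Fin d)) (k : ℕ) (v : V) :
    EuclideanSpace ℝ (Fin (k + 1) × Fin d) :=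
  WithLp.toLp 2 (fun p => wwlLabel G ℓ (p.1 : ℕ) v p.2)

/-!
A `k`-step coupling `ν` is a composition of `k` one-step couplings, so following it is one
admissible strategy in the `k` nested infima defining the WL cost `D_k`: for any ground cost
`D₀ ≥ 0`, `D_k(x'', y'') ≤ Σ D₀(x', y') ν_{x'',y''}(x', y')`. With the labels `d_X(x, ·)` and
`d_Y(y, ·)`, `D₀(x', y') = |d_X(x, x') - d_Y(y, y')|`, so integrating this bound against `γ`
in `(x'', y'')` and then in `(x, y)` yields exactly `dis^(k)(γ, ν)`.
-/

section

variable [Fintype X] [Fintype Y]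

lemma sum_comm₄ {A B C D : Type*} [Fintype A] [Fintype B] [Fintype C] [Fintype D]
    (f : A → B → C → D → ℝ) :
    ∑ a, ∑ b, ∑ c, ∑ d, f a b c d = ∑ c, ∑ d, ∑ a, ∑ b, f a b c d := by
  calc ∑ a, ∑ b, ∑ c, ∑ d, f a b c d = ∑ p : A × B, ∑ q : C × D, f p.1 p.2 q.1 q.2 := by
        simp only [Fintype.sum_prod_type]
    _ = ∑ q : C × D, ∑ p : A × B, f p.1 p.2 q.1 q.2 := Finset.sum_comm
    _ = ∑ c, ∑ d, ∑ a, ∑ b, f a b c d := by simp only [Fintype.sum_prod_type]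

lemma IsCoupling.mul {p : X → ℝ} {q : Y → ℝ} (hp : IsPMF p) (hq : IsPMF q) :
    IsCoupling p q (fun x y => p x * q y) := by
  refine ⟨fun x y => mul_nonneg (hp.1 x) (hq.1 y), fun x => ?_, fun y => ?_⟩
  · rw [← Finset.mul_sum, hq.2, mul_one]
  · rw [← Finset.sum_mul, hp.2, one_mul]

lemma exists_isStepCoupling {mX : X → X → ℝ} {mY : Y → Y → ℝ}
    (hX : ∀ x, IsPMF (mX x)) (hY : ∀ y, IsPMF (mY y)) {k : ℕ} (hk : 1 ≤ k) :
    ∃ ν, IsStepCoupling mX mY k ν := by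
  induction k, hk using Nat.le_induction with
  | base => exact ⟨_, fun x y => IsCoupling.mul (hX x) (hY y)⟩
  | succ k hk ih =>
    obtain ⟨n, rfl⟩ := Nat.exists_eq_add_of_le' hk
    obtain ⟨ν, hν⟩ := ih
    exact ⟨_, ν, _, hν, fun x y => IsCoupling.mul (hX x) (hY y), rfl⟩

section CouplingCost

variable {p : X → ℝ} {q : Y → ℝ} {c : X → Y → ℝ}

lemma nonneg_of_mem_couplingCost (hc : ∀ x y, 0 ≤ c x y) {r : ℝ}
    (hr : r ∈ {r : ℝ | ∃ γ : X → Y → ℝ, IsCoupling p q γ ∧ r = ∑ x, ∑ y, c x y * γ x y}) :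
    0 ≤ r := by
  obtain ⟨γ, hγ, rfl⟩ := hr
  exact Finset.sum_nonneg fun x _ => Finset.sum_nonneg fun y _ => mul_nonneg (hc x y) (hγ.1 x y)

lemma sInf_couplingCost_nonneg (hc : ∀ x y, 0 ≤ c x y) :
    0 ≤ sInf {r : ℝ | ∃ γ : X → Y → ℝ, IsCoupling p q γ ∧ r = ∑ x, ∑ y, c x y * γ x y} :=
  Real.sInf_nonneg fun _ => nonneg_of_mem_couplingCost hc

lemma sInf_couplingCost_le (hc : ∀ x y, 0 ≤ c x y) {γ : X → Y → ℝ} (hγ : IsCoupling p q γ) :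
    sInf {r : ℝ | ∃ γ : X → Y → ℝ, IsCoupling p q γ ∧ r = ∑ x, ∑ y, c x y * γ x y}
      ≤ ∑ x, ∑ y, c x y * γ x y :=
  csInf_le ⟨0, fun _ => nonneg_of_mem_couplingCost hc⟩ ⟨γ, hγ, rfl⟩

end CouplingCost

section CostIter

variable (mX : X → X → ℝ) (mY : Y → Y → ℝ) {D₀ : X → Y → ℝ}

lemma costIter_nonneg (hD₀ : ∀ x y, 0 ≤ D₀ x y) (k : ℕ) (x : X) (y : Y) :
    0 ≤ costIter mX mY D₀ k x y := by
  induction k generalizing x y with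
  | zero => exact hD₀ x y
  | succ k ih => exact sInf_couplingCost_nonneg ih

lemma costIter_le_sum_mul_of_isStepCoupling (hD₀ : ∀ x y, 0 ≤ D₀ x y) :
    ∀ (k : ℕ) (ν : X → Y → X → Y → ℝ), IsStepCoupling mX mY k ν → ∀ x y,
      costIter mX mY D₀ k x y ≤ ∑ x', ∑ y', D₀ x' y' * ν x y x' y'
  | 0, _, hν, _, _ => hν.elim
  | 1, ν, hν, x, y => sInf_couplingCost_le hD₀ (hν x y)
  | k + 2, _, ⟨νk, ν₁, hνk, hν₁, rfl⟩, x, y =>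
    calc costIter mX mY D₀ (k + 2) x y
        ≤ ∑ x'', ∑ y'', costIter mX mY D₀ (k + 1) x'' y'' * ν₁ x y x'' y'' :=
          sInf_couplingCost_le (costIter_nonneg mX mY hD₀ (k + 1)) (hν₁ x y)
      _ ≤ ∑ x'', ∑ y'', (∑ x', ∑ y', D₀ x' y' * νk x'' y'' x' y') * ν₁ x y x'' y'' := by
          gcongr with x'' _ y'' _
          · exact (hν₁ x y).1 x'' y''
          · exact costIter_le_sum_mul_of_isStepCoupling hD₀ (k + 1) νk hνk x'' y''
      _ = ∑ x', ∑ y', D₀ x' y' * ∑ x'', ∑ y'', νk x'' y'' x' y' * ν₁ x y x'' y'' := by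
          simp only [Finset.sum_mul, Finset.mul_sum, mul_assoc]
          exact sum_comm₄ _

end CostIter

end

theorem tlb_le_dGWk_general {X Y : Type*} [Fintype X] [Fintype Y]
    (mX : X → X → ℝ) (dX : X → X → ℝ) (μX : X → ℝ)
    (mY : Y → Y → ℝ) (dY : Y → Y → ℝ) (μY : Y → ℝ)
    (hX : IsMMC mX μX) (hY : IsMMC mY μY)
    (k : ℕ) (hk : 1 ≤ k) :
    sInf {r : ℝ | ∃ γ : X → Y → ℝ, IsCoupling μX μY γ ∧
        r = ∑ x, ∑ y, dWL mX μX (fun x' => dX x x') mY μY (fun y' => dY y y') k * γ x y}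
      ≤ dGWk mX dX μX mY dY μY k := by
  set D₀ := fun (x : X) (y : Y) (x' : X) (y' : Y) => dist (dX x x') (dY y y')
  have hD₀ : ∀ x y x' y', 0 ≤ D₀ x y x' y' := fun _ _ _ _ => dist_nonneg
  obtain ⟨ν₀, hν₀⟩ := exists_isStepCoupling hX.1 hY.1 hk
  refine le_csInf ⟨_, _, ν₀, IsCoupling.mul hX.2.1 hY.2.1, hν₀, rfl⟩ ?_
  rintro _ ⟨γ, ν, hγ, hν, rfl⟩
  calc _ ≤ ∑ x, ∑ y, dWL mX μX (fun x' => dX x x') mY μY (fun y' => dY y y') k * γ x y :=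
        sInf_couplingCost_le (fun x y => sInf_couplingCost_nonneg
          (costIter_nonneg mX mY (hD₀ x y) k)) hγ
    _ ≤ ∑ x, ∑ y, (∑ x'', ∑ y'', costIter mX mY (D₀ x y) k x'' y'' * γ x'' y'') * γ x y := by
        gcongr with x _ y _
        · exact hγ.1 x y
        exact sInf_couplingCost_le (costIter_nonneg mX mY (hD₀ x y) k) hγ
    _ ≤ ∑ x, ∑ y, (∑ x'', ∑ y'',
          (∑ x', ∑ y', D₀ x y x' y' * ν x'' y'' x' y') * γ x'' y'') * γ x y := by
        gcongr with x _ y _ x'' _ y'' _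
        · exact hγ.1 x y
        · exact hγ.1 x'' y''
        exact costIter_le_sum_mul_of_isStepCoupling mX mY (hD₀ x y) k ν hν x'' y''
    _ = disk dX dY γ ν := by
        simp only [disk, D₀, Finset.sum_mul, Real.dist_eq]

theorem tlb_le_dGWk {X Y : Type*} [Fintype X] [Fintype Y]
    (mX : X → X → ℝ) (dX : X → X → ℝ) (μX : X → ℝ)
    (mY : Y → Y → ℝ) (dY : Y → Y → ℝ) (μY : Y → ℝ)
    (hX : IsMMC mX μX) (hY : IsMMC mY μY)
    (hdX : IsMetricOn dX) (hdY : IsMetricOn dY) (k : ℕ) (hk : 1 ≤ k) :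
    sInf {r : ℝ | ∃ γ : X → Y → ℝ, IsCoupling μX μY γ ∧
        r = ∑ x, ∑ y, dWL mX μX (fun x' => dX x x') mY μY (fun y' => dY y y') k * γ x y}
      ≤ dGWk mX dX μX mY dY μY k :=
  tlb_le_dGWk_general mX dX μX mY dY μY hX hY k hk

end WLGW
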